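/- arXiv:2309.01772 — 2 statements merged into one kernel-verified Lean document; each statement's English description precedes it below -/
import Mathlib

section
/- Let m ≥ 1, let w_1,…,w_m be positive weights, and let w_{m+1} be a weight with 0 ≤ w_{m+1} ≤ min_{1≤i≤m} w_i. Then E_T((w_1,…,w_m)) ≥ (m/(m+1)) · E_T((w_1,…,w_m, w_{m+1})); that is, removing a product whose weight is at most every other weight loses at most a factor m/(m+1) of the expected maximum load. -/
open Finset

/-- MNL choice probability for a single customer offered products with weights `w`:
outcome `some i` (select product `i`) has probability `w i / (1 + ∑ j, w j)`, and
outcome `none` (no purchase) has probability `1 / (1 + ∑ j, w j)`. -/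
noncomputable def mnlProb {k : ℕ} (w : Fin k → ℝ) : Option (Fin k) → ℝ
  | none => 1 / (1 + ∑ j, w j)
  | some i => w i / (1 + ∑ j, w j)

/-- The load of product `i`: the number of customers `t` selecting product `i`,
given the outcome `f` of the `T` customers' choices. -/
def loadCount {k T : ℕ} (f : Fin T → Option (Fin k)) (i : Fin k) : ℕ :=
  (Finset.univ.filter fun t => f t = some i).card

/-- `ET T k w` is the expected maximum load when products with weights `w 0, …, w (k-1)`
are statically offered to `T` customers making independent MNL choices; the loads form
a multinomial random vector. -/
noncomputable def ET (T k : ℕ) (w : Fin k → ℝ) : ℝ :=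
  ∑ f : Fin T → Option (Fin k),
    (∏ t, mnlProb w (f t)) * ((Finset.univ.sup (loadCount f) : ℕ) : ℝ)

/-!
Write `M` for the maximum load of the `m + 1` products and `M'` for the maximum over the first
`m`. They differ only when the lightest product `m + 1` is the strict unique leader. Swapping the
labels of `m + 1` and any other product `j` maps that event injectively into the event that `j`
leads, preserves `M`, and does not decrease probability, since afterwards the heavier product
carries the larger load. These `m + 1` events are disjoint, so `E[M; m + 1 leads] ≤ E[M] / (m + 1)`
and hence `E[M] ≤ E[M'] + E[M] / (m + 1)`.

It remains to compare `M'` with the maximum load of the `m`-product system, by a coupling: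
a customer who buys one of the first `m` products keeps that choice, while one who buys nothing
or product `m + 1` redraws from a suitable MNL law. Loads of the first `m` products can then
only grow.
-/

section Rearrangement

variable {R : Type*} [CommSemiring R] [PartialOrder R] [IsOrderedRing R]

lemma pow_mul_pow_le_pow_mul_pow {a b : R} (hb : 0 ≤ b) (hba : b ≤ a) {k l : ℕ} (hkl : k ≤ l) :
    a ^ k * b ^ l ≤ b ^ k * a ^ l := by
  obtain ⟨d, rfl⟩ := Nat.exists_eq_add_of_le hkl
  calc a ^ k * b ^ (k + d) = (a ^ k * b ^ k) * b ^ d := by ring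
    _ ≤ (a ^ k * b ^ k) * a ^ d :=
        mul_le_mul_of_nonneg_left (pow_le_pow_left₀ hb hba d)
          (mul_nonneg (pow_nonneg (hb.trans hba) k) (pow_nonneg hb k))
    _ = b ^ k * a ^ (k + d) := by ring

lemma prod_pow_le_prod_swap_pow {α : Type*} [Fintype α] [DecidableEq α] {q : α → R}
    (hq : ∀ a, 0 ≤ q a) (n : α → ℕ) {x y : α} (hqxy : q y ≤ q x) (hn : n x ≤ n y) :
    ∏ a, q a ^ n a ≤ ∏ a, q (Equiv.swap x y a) ^ n a := by
  rcases eq_or_ne x y with rfl | hxy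
  · simp
  have hy : y ∈ univ.erase x := mem_erase.2 ⟨hxy.symm, mem_univ y⟩
  rw [← mul_prod_erase univ _ (mem_univ x), ← mul_prod_erase _ _ hy,
    ← mul_prod_erase univ _ (mem_univ x), ← mul_prod_erase _ _ hy,
    Equiv.swap_apply_left, Equiv.swap_apply_right, ← mul_assoc, ← mul_assoc]
  have hrest : ∏ a ∈ (univ.erase x).erase y, q (Equiv.swap x y a) ^ n a =
      ∏ a ∈ (univ.erase x).erase y, q a ^ n a := by
    refine prod_congr rfl fun a ha => ?_
    obtain ⟨hay, hax, -⟩ := by simpa only [mem_erase] using ha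
    rw [Equiv.swap_apply_of_ne_of_ne hax hay]
  rw [hrest]
  exact mul_le_mul_of_nonneg_right (pow_mul_pow_le_pow_mul_pow (hq y) hqxy hn)
    (prod_nonneg fun a _ => pow_nonneg (hq a) _)

end Rearrangement

lemma prod_comp_eq_prod_pow_card {ι α M : Type*} [Fintype ι] [Fintype α] [DecidableEq α]
    [CommMonoid M] (g : α → M) (f : ι → α) :
    ∏ t, g (f t) = ∏ a, g a ^ #{t | f t = a} := by
  rw [← prod_fiberwise univ f fun t => g (f t)]
  refine prod_congr rfl fun a _ => ?_
  rw [← prod_const]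
  exact prod_congr rfl fun t ht => by rw [(mem_filter.1 ht).2]

def maxLoad {T k : ℕ} (f : Fin T → Option (Fin k)) : ℕ :=
  univ.sup (loadCount f)

noncomputable def iidExpect {ι α : Type*} [Fintype ι] [DecidableEq ι] [Fintype α] (p : α → ℝ)
    (X : (ι → α) → ℝ) : ℝ :=
  ∑ f, (∏ t, p (f t)) * X f

lemma ET_eq_iidExpect (T k : ℕ) (w : Fin k → ℝ) :
    ET T k w = iidExpect (mnlProb w) fun f : Fin T → _ => (maxLoad f : ℝ) := rfl

section Loads

variable {T k : ℕ}

lemma loadCount_map_comp {l : ℕ} {σ : Fin k → Fin l} (hσ : Function.Injective σ)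
    (f : Fin T → Option (Fin k)) (i : Fin k) :
    loadCount (Option.map σ ∘ f) (σ i) = loadCount f i := by
  unfold loadCount
  congr 1
  refine filter_congr fun t _ => ?_
  exact (Option.map_injective hσ).eq_iff' rfl

lemma maxLoad_map_comp (σ : Equiv.Perm (Fin k)) (f : Fin T → Option (Fin k)) :
    maxLoad (Option.map σ ∘ f) = maxLoad f := by
  have h : loadCount (Option.map σ ∘ f) = loadCount f ∘ σ.symm := by
    funext i
    simpa using loadCount_map_comp σ.injective f (σ.symm i)
  rw [maxLoad, maxLoad, h]
  conv_rhs => rw [← map_univ_equiv σ.symm, sup_map]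
  rfl

lemma prod_le_prod_map_swap {p : Option (Fin k) → ℝ} (hp : ∀ a, 0 ≤ p a) {j l : Fin k}
    (hpjl : p (some l) ≤ p (some j)) {f : Fin T → Option (Fin k)}
    (hf : loadCount f j ≤ loadCount f l) :
    ∏ t, p (f t) ≤ ∏ t, p ((Option.map (Equiv.swap j l) ∘ f) t) := by
  simp only [Function.comp_apply, ← Equiv.optionCongr_apply, Equiv.optionCongr_swap]
  rw [prod_comp_eq_prod_pow_card p f, prod_comp_eq_prod_pow_card (fun a => p (Equiv.swap _ _ a)) f]
  exact prod_pow_le_prod_swap_pow hp _ hpjl hf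

def strictMaxSet (T : ℕ) (j : Fin k) : Finset (Fin T → Option (Fin k)) :=
  {f | ∀ j' ≠ j, loadCount f j' < loadCount f j}

lemma map_swap_comp_mem_strictMaxSet {j l : Fin k} {f : Fin T → Option (Fin k)}
    (hf : f ∈ strictMaxSet T l) : Option.map (Equiv.swap j l) ∘ f ∈ strictMaxSet T j := by
  simp only [strictMaxSet, mem_filter, mem_univ, true_and] at hf ⊢
  intro j' hj'
  have hσ := (Equiv.swap j l).injective
  have hj'σ : loadCount (Option.map (Equiv.swap j l) ∘ f) j' = loadCount f (Equiv.swap j l j') := by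
    simpa using loadCount_map_comp hσ f (Equiv.swap j l j')
  have hjσ : loadCount (Option.map (Equiv.swap j l) ∘ f) j = loadCount f l := by
    simpa using loadCount_map_comp hσ f l
  rw [hj'σ, hjσ]
  exact hf _ (by simpa [Equiv.swap_apply_eq_iff] using hj')

lemma sum_strictMaxSet_le_sum_strictMaxSet {p : Option (Fin k) → ℝ} (hp : ∀ a, 0 ≤ p a)
    {j l : Fin k} (hpjl : p (some l) ≤ p (some j)) :
    ∑ f ∈ strictMaxSet T l, (∏ t, p (f t)) * (maxLoad f : ℝ) ≤
      ∑ f ∈ strictMaxSet T j, (∏ t, p (f t)) * (maxLoad f : ℝ) := by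
  set σ := Equiv.swap j l
  have hinj : Function.Injective fun f : Fin T → Option (Fin k) => Option.map σ ∘ f :=
    (Option.map_injective σ.injective).comp_left
  calc ∑ f ∈ strictMaxSet T l, (∏ t, p (f t)) * (maxLoad f : ℝ)
      ≤ ∑ f ∈ strictMaxSet T l, (∏ t, p ((Option.map σ ∘ f) t)) *
          (maxLoad (Option.map σ ∘ f) : ℝ) := by
        refine sum_le_sum fun f hf => ?_
        rw [maxLoad_map_comp]
        refine mul_le_mul_of_nonneg_right (prod_le_prod_map_swap hp hpjl ?_) (Nat.cast_nonneg _)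
        rcases eq_or_ne j l with rfl | hjl
        · exact le_rfl
        · exact ((mem_filter.1 hf).2 j hjl).le
    _ = ∑ g ∈ (strictMaxSet T l).image (Option.map σ ∘ ·),
          (∏ t, p (g t)) * (maxLoad g : ℝ) := by
        rw [sum_image fun _ _ _ _ h => hinj h]
    _ ≤ ∑ g ∈ strictMaxSet T j, (∏ t, p (g t)) * (maxLoad g : ℝ) := by
        refine sum_le_sum_of_subset_of_nonneg ?_ fun g _ _ =>
          mul_nonneg (prod_nonneg fun t _ => hp _) (Nat.cast_nonneg _)
        intro g hg
        obtain ⟨f, hf, rfl⟩ := mem_image.1 hg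
        exact map_swap_comp_mem_strictMaxSet hf

lemma sum_sum_strictMaxSet_le {X : (Fin T → Option (Fin k)) → ℝ} (hX : ∀ f, 0 ≤ X f) :
    ∑ j, ∑ f ∈ strictMaxSet T j, X f ≤ ∑ f, X f := by
  classical
  have hdisj : ((univ : Finset (Fin k)) : Set (Fin k)).PairwiseDisjoint (strictMaxSet T) := by
    intro j _ j' _ hjj'
    refine disjoint_left.2 fun f hf hf' => ?_
    have h1 := (mem_filter.1 hf).2 j' hjj'.symm
    have h2 := (mem_filter.1 hf').2 j hjj'
    omega
  rw [← sum_biUnion hdisj]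
  exact sum_le_univ_sum_of_nonneg hX

end Loads

lemma maxLoad_eq_sup_init_of_notMem_strictMaxSet {T m : ℕ} {f : Fin T → Option (Fin (m + 1))}
    (hf : f ∉ strictMaxSet T (Fin.last m)) :
    maxLoad f = univ.sup (Fin.init (loadCount f)) := by
  simp only [strictMaxSet, mem_filter, mem_univ, true_and, not_forall, not_lt] at hf
  obtain ⟨j, hj, hjlast⟩ := hf
  obtain ⟨i, rfl⟩ := Fin.exists_castSucc_eq.2 hj
  refine le_antisymm (Finset.sup_le fun j' _ => ?_)
    (Finset.sup_le fun i' _ => le_sup (f := loadCount f) (mem_univ _))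
  refine Fin.lastCases ?_ (fun i' => ?_) j'
  · exact hjlast.trans (le_sup (f := Fin.init (loadCount f)) (mem_univ i))
  · exact le_sup (f := Fin.init (loadCount f)) (mem_univ i')

theorem mul_iidExpect_maxLoad_le {T m : ℕ} {p : Option (Fin (m + 1)) → ℝ} (hp : ∀ a, 0 ≤ p a)
    (hlast : ∀ j, p (some (Fin.last m)) ≤ p (some j)) :
    (m / (m + 1) : ℝ) * iidExpect p (fun f : Fin T → _ => (maxLoad f : ℝ)) ≤
      iidExpect p (fun f : Fin T → _ => ((univ.sup (Fin.init (loadCount f)) : ℕ) : ℝ)) := by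
  set X : (Fin T → Option (Fin (m + 1))) → ℝ := fun f => (∏ t, p (f t)) * (maxLoad f : ℝ)
  have hX : ∀ f, 0 ≤ X f := fun f => mul_nonneg (prod_nonneg fun t _ => hp _) (Nat.cast_nonneg _)
  set L := ∑ f ∈ strictMaxSet T (Fin.last m), X f
  have hsplit : iidExpect p (fun f : Fin T → _ => (maxLoad f : ℝ)) ≤
      iidExpect p (fun f : Fin T → _ => ((univ.sup (Fin.init (loadCount f)) : ℕ) : ℝ)) + L := by
    have hL : L = ∑ f, if f ∈ strictMaxSet T (Fin.last m) then X f else 0 := by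
      rw [sum_ite_mem, univ_inter]
    rw [iidExpect, iidExpect, hL, ← sum_add_distrib]
    refine sum_le_sum fun f _ => ?_
    split_ifs with hf
    · exact le_add_of_nonneg_left (mul_nonneg (prod_nonneg fun t _ => hp _) (Nat.cast_nonneg _))
    · rw [add_zero, maxLoad_eq_sup_init_of_notMem_strictMaxSet hf]
  have hlead : (m + 1 : ℝ) * L ≤ iidExpect p (fun f : Fin T → _ => (maxLoad f : ℝ)) :=
    calc (m + 1 : ℝ) * L = ∑ _j : Fin (m + 1), L := by simp
      _ ≤ ∑ j, ∑ f ∈ strictMaxSet T j, X f :=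
        sum_le_sum fun j _ => sum_strictMaxSet_le_sum_strictMaxSet hp (hlast j)
      _ ≤ _ := sum_sum_strictMaxSet_le hX
  have hm : (0 : ℝ) < m + 1 := by positivity
  rw [div_mul_eq_mul_div, div_le_iff₀ hm]
  nlinarith [mul_le_mul_of_nonneg_left hsplit hm.le]

theorem iidExpect_le_iidExpect_of_kernel {ι α β : Type*} [Fintype ι] [DecidableEq ι] [Fintype α]
    [Fintype β] {p : α → ℝ} {q : β → ℝ} {K : α → β → ℝ} (hp : ∀ a, 0 ≤ p a)
    (hK : ∀ a b, 0 ≤ K a b) (hK_row : ∀ a, ∑ b, K a b = 1) (hq : ∀ b, ∑ a, p a * K a b = q b)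
    {X : (ι → α) → ℝ} {Y : (ι → β) → ℝ} (hXY : ∀ f g, (∀ t, K (f t) (g t) ≠ 0) → X f ≤ Y g) :
    iidExpect p X ≤ iidExpect q Y := by
  have hrow : ∀ f : ι → α, ∑ g : ι → β, ∏ t, K (f t) (g t) = 1 := fun f => by
    rw [← Fintype.prod_sum]; simp [hK_row]
  have hcol : ∀ g : ι → β, ∑ f : ι → α, (∏ t, p (f t)) * ∏ t, K (f t) (g t) = ∏ t, q (g t) :=
    fun g => by
      simp_rw [← prod_mul_distrib]
      rw [← Fintype.prod_sum fun t a => p a * K a (g t)]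
      exact prod_congr rfl fun t _ => hq (g t)
  calc iidExpect p X
      = ∑ f : ι → α, ∑ g : ι → β, (∏ t, p (f t)) * X f * ∏ t, K (f t) (g t) := by
        simp_rw [← mul_sum, hrow, mul_one]; rfl
    _ ≤ ∑ f : ι → α, ∑ g : ι → β, (∏ t, p (f t)) * Y g * ∏ t, K (f t) (g t) := by
        refine sum_le_sum fun f _ => sum_le_sum fun g _ => ?_
        by_cases hKfg : ∀ t, K (f t) (g t) ≠ 0
        · exact mul_le_mul_of_nonneg_right
            (mul_le_mul_of_nonneg_left (hXY f g hKfg) (prod_nonneg fun t _ => hp _))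
            (prod_nonneg fun t _ => hK _ _)
        · obtain ⟨t, ht⟩ := not_forall_not.1 hKfg
          rw [prod_eq_zero (f := fun t => K (f t) (g t)) (mem_univ t) ht, mul_zero, mul_zero]
    _ = iidExpect q Y := by
        rw [sum_comm, iidExpect]
        refine sum_congr rfl fun g _ => ?_
        rw [← hcol, sum_mul]
        exact sum_congr rfl fun f _ => by ring

section MNL

variable {k : ℕ} {w : Fin k → ℝ}

lemma mnlProb_nonneg (hw : ∀ i, 0 ≤ w i) (a : Option (Fin k)) : 0 ≤ mnlProb w a := by
  have : 0 ≤ ∑ j, w j := sum_nonneg fun j _ => hw j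
  cases a with
  | none => exact div_nonneg zero_le_one (by linarith)
  | some i => exact div_nonneg (hw i) (by linarith)

lemma sum_mnlProb (h : 1 + ∑ j, w j ≠ 0) : ∑ a, mnlProb w a = 1 := by
  rw [Fintype.sum_option]
  simp only [mnlProb]
  rw [← sum_div, ← add_div, div_self h]

lemma mnlProb_some_le_mnlProb_some (hw : ∀ i, 0 ≤ w i) {i j : Fin k} (hij : w i ≤ w j) :
    mnlProb w (some i) ≤ mnlProb w (some j) :=
  div_le_div_of_nonneg_right hij (by linarith [sum_nonneg (s := univ) fun j _ => hw j])

end MNL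

noncomputable def dropLastKernel {m : ℕ} (r : Option (Fin m) → ℝ) :
    Option (Fin (m + 1)) → Option (Fin m) → ℝ
  | none => r
  | some j => Fin.lastCases r (fun i b => if b = some i then 1 else 0) j

section DropLastKernel

variable {m : ℕ} {r : Option (Fin m) → ℝ}

@[simp] lemma dropLastKernel_none : dropLastKernel r none = r := rfl

@[simp] lemma dropLastKernel_last : dropLastKernel r (some (Fin.last m)) = r := by
  simp [dropLastKernel]

@[simp] lemma dropLastKernel_castSucc (i : Fin m) (b : Option (Fin m)) :
    dropLastKernel r (some i.castSucc) b = if b = some i then 1 else 0 := by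
  simp [dropLastKernel]

lemma dropLastKernel_nonneg (hr : ∀ b, 0 ≤ r b) (a : Option (Fin (m + 1))) (b : Option (Fin m)) :
    0 ≤ dropLastKernel r a b := by
  rcases a with _ | j
  · exact hr b
  · induction j using Fin.lastCases with
    | last => simpa using hr b
    | cast i => rw [dropLastKernel_castSucc]; split_ifs <;> norm_num

lemma sum_dropLastKernel (hr : ∑ b, r b = 1) (a : Option (Fin (m + 1))) :
    ∑ b, dropLastKernel r a b = 1 := by
  rcases a with _ | j
  · exact hr
  · induction j using Fin.lastCases with
    | last => simpa using hr
    | cast i => simp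

lemma eq_some_of_dropLastKernel_castSucc_ne_zero {i : Fin m} {b : Option (Fin m)}
    (h : dropLastKernel r (some i.castSucc) b ≠ 0) : b = some i := by
  by_contra hb
  simp [hb] at h

end DropLastKernel

/-- Redrawing from the MNL law with weights scaled by `wl / (1 + ∑ i, w i + wl)` raises the
probability of product `i` from `w i / (1 + ∑ i, w i + wl)` to exactly `w i / (1 + ∑ i, w i)`. -/
lemma sum_mnlProb_snoc_mul_dropLastKernel {m : ℕ} {w : Fin m → ℝ} (hw : ∀ i, 0 ≤ w i) {wl : ℝ}
    (h0 : 0 ≤ wl) (b : Option (Fin m)) :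
    ∑ a, mnlProb (Fin.snoc w wl) a *
        dropLastKernel (mnlProb ((wl / (1 + ∑ i, w i + wl)) • w)) a b = mnlProb w b := by
  have hS : 0 ≤ ∑ i, w i := sum_nonneg fun i _ => hw i
  have hsnoc : ∑ j, (Fin.snoc w wl : Fin (m + 1) → ℝ) j = ∑ i, w i + wl := by
    simp [Fin.sum_univ_castSucc]
  rw [Fintype.sum_option, Fin.sum_univ_castSucc]
  have h1 : (1 + ∑ i, w i + wl) ≠ 0 := by positivity
  cases b <;>
  · simp only [mnlProb, hsnoc, one_div, dropLastKernel_none, dropLastKernel_last,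
      dropLastKernel_castSucc, Fin.snoc_castSucc, Fin.snoc_last, Pi.smul_apply, smul_eq_mul,
      ← mul_sum, reduceCtorEq, Option.some.injEq, ↓reduceIte, mul_ite, mul_one, mul_zero,
      sum_const_zero, sum_ite_eq, mem_univ, zero_add]
    field_simp
    ring

lemma snoc_nonneg {m : ℕ} {w : Fin m → ℝ} (hw : ∀ i, 0 ≤ w i) {wl : ℝ} (h0 : 0 ≤ wl)
    (j : Fin (m + 1)) : 0 ≤ (Fin.snoc w wl : Fin (m + 1) → ℝ) j := by
  induction j using Fin.lastCases with
  | last => simpa using h0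
  | cast i => simpa using hw i

theorem iidExpect_sup_init_le_ET {T m : ℕ} {w : Fin m → ℝ} (hw : ∀ i, 0 ≤ w i) {wl : ℝ}
    (h0 : 0 ≤ wl) :
    iidExpect (mnlProb (Fin.snoc w wl))
        (fun f : Fin T → _ => ((univ.sup (Fin.init (loadCount f)) : ℕ) : ℝ)) ≤ ET T m w := by
  have hS : 0 ≤ ∑ i, w i := sum_nonneg fun i _ => hw i
  have hc : 0 ≤ wl / (1 + ∑ i, w i + wl) := by positivity
  have hcw : ∀ i, 0 ≤ ((wl / (1 + ∑ i, w i + wl)) • w) i := fun i => mul_nonneg hc (hw i)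
  have hr_sum : ∑ b, mnlProb ((wl / (1 + ∑ i, w i + wl)) • w) b = 1 :=
    sum_mnlProb (by linarith [sum_nonneg (s := univ) fun i _ => hcw i])
  rw [ET_eq_iidExpect]
  refine iidExpect_le_iidExpect_of_kernel (mnlProb_nonneg (snoc_nonneg hw h0))
    (dropLastKernel_nonneg (mnlProb_nonneg hcw)) (sum_dropLastKernel hr_sum)
    (sum_mnlProb_snoc_mul_dropLastKernel hw h0) fun f g hfg => ?_
  refine Nat.cast_le.2 (Finset.sup_le fun i _ => ?_)
  refine le_trans ?_ (le_sup (f := loadCount g) (mem_univ i))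
  refine card_le_card (s := {t | f t = some i.castSucc}) fun t ht => ?_
  simp only [mem_filter, mem_univ, true_and] at ht ⊢
  exact eq_some_of_dropLastKernel_castSucc_ne_zero (ht ▸ hfg t)

theorem drop_lightest_product_loss_general
    (T m : ℕ) (w : Fin m → ℝ) (hw : ∀ i, 0 < w i)
    (wlast : ℝ) (h0 : 0 ≤ wlast) (hle : ∀ i, wlast ≤ w i) :
    ET T m w ≥ ((m : ℝ) / ((m : ℝ) + 1)) * ET T (m + 1) (Fin.snoc w wlast) := by
  have hw₀ : ∀ i, 0 ≤ w i := fun i => (hw i).le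
  have hlast : ∀ j, mnlProb (Fin.snoc w wlast) (some (Fin.last m)) ≤
      mnlProb (Fin.snoc w wlast) (some j) := by
    refine fun j => mnlProb_some_le_mnlProb_some (snoc_nonneg hw₀ h0) ?_
    induction j using Fin.lastCases with
    | last => exact le_rfl
    | cast i => simpa using hle i
  rw [ge_iff_le, ET_eq_iidExpect T (m + 1)]
  exact (mul_iidExpect_maxLoad_le (mnlProb_nonneg (snoc_nonneg hw₀ h0)) hlast).trans
    (iidExpect_sup_init_le_ET hw₀ h0)

/-- Removing a product whose weight is at most every other weight loses at most a
factor `m/(m+1)` of the expected maximum load. -/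
theorem drop_lightest_product_loss
    (T m : ℕ) (hm : 1 ≤ m) (w : Fin m → ℝ) (hw : ∀ i, 0 < w i)
    (wlast : ℝ) (h0 : 0 ≤ wlast) (hle : ∀ i, wlast ≤ w i) :
    ET T m w ≥ ((m : ℝ) / ((m : ℝ) + 1)) * ET T (m + 1) (Fin.snoc w wlast) :=
  drop_lightest_product_loss_general T m w hw wlast h0 hle
end

section
/- Let (L_1,…,L_k) be a multinomial random vector with T trials and probability vector (p_1,…,p_k), and let U ⊆ {1,…,n} be a set of products such that min_{1≤i≤k} p_i ≥ max_{i∈U} v_i/(1+v_i). Then E(max_{1≤i≤k} L_i) ≥ OPT^DP(U). -/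
/-!
Write `G_t(c) = E[max_i (c_i + L_i)]` for `L` multinomial with `t` trials. By induction on `t`,
`M_t(ℓ) ≤ G_t(c)` whenever `ℓ` is weakly submajorized by `c`, i.e. for every `m` the sum of the
`m` largest entries of `ℓ` is at most that of `c` (`m = 1` is the base case). A customer offered
`S` buys product `j` with probability `φ_j(S) ≤ v_j / (1 + v_j) ≤ min_i p_i`. The bins `i` with
`ℓ + e_j ≺ c + e_i` shrink as `ℓ_j` grows, and there are at least `#{j' | ℓ_j ≤ ℓ_j'}` of them
unless every bin qualifies. This is Hall's condition for coupling the purchase with the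
multinomial trial so that the invariant persists; a no-purchase preserves it against any trial.
-/

open Finset

/-- MNL choice probability of product `i` when assortment `S` is offered. -/
noncomputable def phi {n : ℕ} (v : Fin n → ℝ) (S : Finset (Fin n)) (i : Fin n) : ℝ :=
  v i / (1 + ∑ j ∈ S, v j)

/-- MNL no-purchase probability when assortment `S` is offered. -/
noncomputable def phi0 {n : ℕ} (v : Fin n → ℝ) (S : Finset (Fin n)) : ℝ :=
  1 / (1 + ∑ j ∈ S, v j)

/-- The dynamic-programming value functions `M_t(ℓ)` of the adaptive maximum load
problem over the universe `U`: `M_0(ℓ) = max_i ℓ_i` and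
`M_t(ℓ) = max_{S ⊆ U} (φ_0(S)·M_{t-1}(ℓ) + ∑_{i∈S} φ_i(S)·M_{t-1}(ℓ + e_i))`. -/
noncomputable def dpVal {n : ℕ} (v : Fin n → ℝ) (U : Finset (Fin n)) :
    ℕ → (Fin n → ℕ) → ℝ
  | 0, ℓ => ((Finset.univ.sup ℓ : ℕ) : ℝ)
  | t + 1, ℓ =>
      U.powerset.sup' ⟨∅, Finset.empty_mem_powerset U⟩ fun S =>
        phi0 v S * dpVal v U t ℓ +
          ∑ i ∈ S, phi v S i * dpVal v U t (Function.update ℓ i (ℓ i + 1))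

/-- `OPT^DP(U) = M_T(0)`: the optimal expected maximum load achievable by an adaptive
policy offering assortments from the universe `U` to `T` sequentially arriving customers
making independent MNL choices. -/
noncomputable def dpOpt {n : ℕ} (v : Fin n → ℝ) (U : Finset (Fin n)) (T : ℕ) : ℝ :=
  dpVal v U T fun _ => 0

/-- `E(max_{1 ≤ i ≤ k} L_i)` where `(L_1, …, L_k)` is a multinomial random vector with `T`
trials and probability vector `p`: each of `T` independent trials results in outcome
`i : Fin k` with probability `p i`, and `L_i` counts the trials with outcome `i`. -/
noncomputable def multiExpMax (T k : ℕ) (p : Fin k → ℝ) : ℝ :=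
  ∑ f : Fin T → Fin k,
    (∏ t, p (f t)) *
      ((Finset.univ.sup fun i => (Finset.univ.filter fun t => f t = i).card : ℕ) : ℝ)

section TopSum

variable {ι : Type*} [Fintype ι]

def topSum (m : ℕ) (x : ι → ℕ) : ℕ :=
  ((univ : Finset (Finset ι)).filter fun A => #A ≤ m).sup fun A => ∑ i ∈ A, x i

lemma sum_le_topSum {m : ℕ} {x : ι → ℕ} {A : Finset ι} (hA : #A ≤ m) :
    ∑ i ∈ A, x i ≤ topSum m x :=
  le_sup (f := fun A => ∑ i ∈ A, x i) (by simpa using hA)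

lemma topSum_le {m b : ℕ} {x : ι → ℕ} (h : ∀ A : Finset ι, #A ≤ m → ∑ i ∈ A, x i ≤ b) :
    topSum m x ≤ b :=
  Finset.sup_le fun A hA => h A (mem_filter.mp hA).2

lemma exists_card_eq_sum_eq_topSum (m : ℕ) (x : ι → ℕ) :
    ∃ A : Finset ι, #A = min m (Fintype.card ι) ∧ ∑ i ∈ A, x i = topSum m x := by
  obtain ⟨A, hA, hval⟩ := exists_mem_eq_sup ((univ : Finset (Finset ι)).filter fun A => #A ≤ m)
    ⟨∅, by simp⟩ fun A => ∑ i ∈ A, x i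
  have hAm : #A ≤ min m (Fintype.card ι) := le_min (mem_filter.mp hA).2 (card_le_univ A)
  obtain ⟨B, hAB, -, hB⟩ := exists_subsuperset_card_eq (subset_univ A) hAm (by simp)
  refine ⟨B, hB, le_antisymm (sum_le_topSum (by simp [hB])) ?_⟩
  exact hval.trans_le (sum_le_sum_of_subset hAB)

lemma topSum_mono {m m' : ℕ} (h : m ≤ m') (x : ι → ℕ) : topSum m x ≤ topSum m' x :=
  topSum_le fun _ hA => sum_le_topSum (hA.trans h)

lemma topSum_le_topSum {m : ℕ} {x y : ι → ℕ} (h : x ≤ y) : topSum m x ≤ topSum m y :=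
  topSum_le fun _ hA => (sum_le_sum fun i _ => h i).trans (sum_le_topSum hA)

@[simp]
lemma topSum_zero_left (x : ι → ℕ) : topSum 0 x = 0 :=
  Nat.eq_zero_of_le_zero <| topSum_le fun A hA => by simp [card_eq_zero.mp (Nat.le_zero.mp hA)]

@[simp]
lemma topSum_zero_right (m : ℕ) : topSum m (0 : ι → ℕ) = 0 :=
  Nat.eq_zero_of_le_zero <| topSum_le fun _ _ => by simp

lemma topSum_one (x : ι → ℕ) : topSum 1 x = univ.sup x := by
  refine le_antisymm (topSum_le fun A hA => ?_) (Finset.sup_le fun i _ => ?_)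
  · rcases Nat.le_one_iff_eq_zero_or_eq_one.mp hA with hA | hA
    · simp [card_eq_zero.mp hA]
    · obtain ⟨a, rfl⟩ := card_eq_one.mp hA
      simpa using le_sup (f := x) (mem_univ a)
  · simpa using sum_le_topSum (x := x) (A := {i}) (by simp)

end TopSum

section Concavity

variable {ι : Type*} [Fintype ι] {m : ℕ} {x : ι → ℕ}

lemma topSum_le_add_topSum_pred_of_mem {A : Finset ι} (hA : #A ≤ m)
    (hval : topSum m x ≤ ∑ i ∈ A, x i) {i : ι} (hi : i ∈ A) :
    topSum m x ≤ x i + topSum (m - 1) x := by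
  classical
  have : ∑ j ∈ A.erase i, x j ≤ topSum (m - 1) x :=
    sum_le_topSum (by rw [card_erase_of_mem hi]; omega)
  rw [← add_sum_erase A x hi] at hval
  omega

lemma topSum_succ_add_topSum_pred_le (hm : 1 ≤ m) (x : ι → ℕ) :
    topSum (m + 1) x + topSum (m - 1) x ≤ 2 * topSum m x := by
  classical
  obtain ⟨A, hA, hAval⟩ := exists_card_eq_sum_eq_topSum (m + 1) x
  obtain ⟨B, hB, hBval⟩ := exists_card_eq_sum_eq_topSum (m - 1) x
  by_cases hAm : #A ≤ m
  · have := hAval ▸ sum_le_topSum hAm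
    have := topSum_mono (Nat.sub_le m 1) x
    omega
  obtain ⟨a, haA, haB⟩ := exists_mem_notMem_of_card_lt_card (s := B) (t := A) (by omega)
  have h₁ : ∑ i ∈ A.erase a, x i ≤ topSum m x :=
    sum_le_topSum (by rw [card_erase_of_mem haA]; omega)
  have h₂ : ∑ i ∈ insert a B, x i ≤ topSum m x :=
    sum_le_topSum (by rw [card_insert_of_notMem haB]; omega)
  rw [← add_sum_erase A x haA] at hAval
  rw [sum_insert haB] at h₂
  omega

/-- The `m`-th largest entry, `topSum m x - topSum (m - 1) x`, is antitone in `m`. -/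
lemma topSum_le_add_topSum_pred_of_le {a m' : ℕ} (hm : 1 ≤ m) (hmm' : m ≤ m')
    (h : topSum m x ≤ a + topSum (m - 1) x) : topSum m' x ≤ a + topSum (m' - 1) x := by
  induction m', hmm' using Nat.le_induction with
  | base => exact h
  | succ m' hm' ih =>
    have := topSum_succ_add_topSum_pred_le (x := x) (hm.trans hm')
    simp only [Nat.add_sub_cancel]
    omega

end Concavity

section Increment

variable {ι : Type*} [DecidableEq ι]

lemma sum_add_single (x : ι → ℕ) (j : ι) (A : Finset ι) :
    ∑ i ∈ A, (x + Pi.single j 1 : ι → ℕ) i = ∑ i ∈ A, x i + if j ∈ A then 1 else 0 := by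
  simp only [Pi.add_apply, sum_add_distrib, sum_pi_single']

variable [Fintype ι] {m : ℕ} {x : ι → ℕ}

lemma topSum_add_single_le (m : ℕ) (x : ι → ℕ) (j : ι) :
    topSum m (x + Pi.single j 1) ≤ topSum m x + 1 :=
  topSum_le fun A hA => by
    have := sum_le_topSum (x := x) hA
    rw [sum_add_single]
    split_ifs <;> omega

lemma topSum_add_single_of_lt {j : ι} (h : x j + topSum (m - 1) x < topSum m x) :
    topSum m (x + Pi.single j 1) = topSum m x := by
  refine le_antisymm (topSum_le fun A hA => ?_) (topSum_le_topSum le_self_add)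
  rw [sum_add_single]
  by_cases hj : j ∈ A
  · have : ∑ i ∈ A.erase j, x i ≤ topSum (m - 1) x :=
      sum_le_topSum (by rw [card_erase_of_mem hj]; omega)
    rw [← add_sum_erase A x hj, if_pos hj]
    omega
  · simpa [hj] using sum_le_topSum hA

/-- `topSum m x ≤ x j + topSum (m - 1) x` says that `x j` is at least the `m`-th largest entry. -/
lemma topSum_add_single_of_le (hm : 1 ≤ m) {j : ι} (h : topSum m x ≤ x j + topSum (m - 1) x) :
    topSum m (x + Pi.single j 1) = topSum m x + 1 := by
  refine le_antisymm (topSum_add_single_le m x j) ?_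
  obtain ⟨B, hB, hBval⟩ := exists_card_eq_sum_eq_topSum m x
  obtain ⟨C, hC, hCval⟩ := exists_card_eq_sum_eq_topSum (m - 1) x
  by_cases hjB : j ∈ B
  · have := sum_le_topSum (x := x + Pi.single j 1) (hB.trans_le (min_le_left _ _))
    rw [sum_add_single, if_pos hjB, hBval] at this
    exact this
  by_cases hjC : j ∉ C
  · have := sum_le_topSum (x := x + Pi.single j 1) (m := m) (A := insert j C)
      (by rw [card_insert_of_notMem hjC]; omega)
    rw [sum_add_single, sum_insert hjC, if_pos (mem_insert_self j C)] at this
    omega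
  rw [not_not] at hjC
  -- `j` is in a best `(m - 1)`-set `C` but in no best `m`-set `B`: extend `C` by some `b ∈ B`
  have hBcard : #B < Fintype.card ι := card_lt_univ_of_notMem hjB
  obtain ⟨b, hbB, hbC⟩ := exists_mem_notMem_of_card_lt_card (s := C) (t := B) (by omega)
  have hb := topSum_le_add_topSum_pred_of_mem (hB.trans_le (min_le_left _ _)) hBval.ge hbB
  have := sum_le_topSum (x := x + Pi.single j 1) (m := m) (A := insert b C)
    (by rw [card_insert_of_notMem hbC]; omega)
  rw [sum_add_single, sum_insert hbC, if_pos (mem_insert_of_mem hjC)] at this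
  omega

end Increment

section Submajorization

variable {ι κ : Type*} [Fintype ι] [Fintype κ]

/-- Weak submajorization `x ≺_w y`; vectors of different lengths are compared as if padded with
zeros. -/
def Submajorized (x : ι → ℕ) (y : κ → ℕ) : Prop :=
  ∀ m, topSum m x ≤ topSum m y

lemma Submajorized.refl (x : ι → ℕ) : Submajorized x x := fun _ => le_rfl

lemma Submajorized.trans {ν : Type*} [Fintype ν] {x : ι → ℕ} {y : κ → ℕ} {z : ν → ℕ}
    (hxy : Submajorized x y) (hyz : Submajorized y z) : Submajorized x z :=
  fun m => (hxy m).trans (hyz m)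

variable [DecidableEq κ] {x : ι → ℕ} {y : κ → ℕ}

lemma Submajorized.add_single_right (h : Submajorized x y) (i : κ) :
    Submajorized x (y + Pi.single i 1) :=
  fun m => (h m).trans (topSum_le_topSum le_self_add)

variable [DecidableEq ι]

lemma Submajorized.add_single {j : ι} {i : κ} (h : Submajorized x y) (hji : x j ≤ y i) :
    Submajorized (x + Pi.single j 1) (y + Pi.single i 1) := by
  intro m
  rcases Nat.eq_zero_or_pos m with rfl | hm
  · simp
  have hx := topSum_add_single_le m x j
  rcases (h m).lt_or_eq with hlt | heq
  · exact (by omega : topSum m (x + Pi.single j 1) ≤ topSum m y).trans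
      (topSum_le_topSum le_self_add)
  by_cases hxj : topSum m x ≤ x j + topSum (m - 1) x
  · have hyi : topSum m y ≤ y i + topSum (m - 1) y := by have := h (m - 1); omega
    rw [topSum_add_single_of_le hm hxj, topSum_add_single_of_le hm hyi, heq]
  · rw [topSum_add_single_of_lt (not_le.mp hxj), heq]
    exact topSum_le_topSum le_self_add

end Submajorization

section Threshold

variable {ι : Type*} [Fintype ι] {m : ℕ} {x : ι → ℕ}

lemma le_card_or_eq_univ_of_topSum {W : Finset ι}
    (hW : ∀ i, topSum m x ≤ x i + topSum (m - 1) x → i ∈ W) : m ≤ #W ∨ W = univ := by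
  obtain ⟨A, hA, hAval⟩ := exists_card_eq_sum_eq_topSum m x
  have hAW : A ⊆ W := fun i hi =>
    hW i (topSum_le_add_topSum_pred_of_mem (hA.trans_le (min_le_left _ _)) hAval.ge hi)
  rcases min_choice m (Fintype.card ι) with hmin | hmin
  · exact Or.inl (hmin ▸ hA ▸ card_le_card hAW)
  · exact Or.inr (eq_univ_of_card W
      (le_antisymm (card_le_univ W) ((hA.trans hmin) ▸ card_le_card hAW)))

lemma topSum_add_le_topSum_succ {a : ℕ} (h : m < #{i | a ≤ x i}) :
    topSum m x + a ≤ topSum (m + 1) x := by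
  classical
  obtain ⟨A, hA, hAval⟩ := exists_card_eq_sum_eq_topSum m x
  obtain ⟨i, hi, hiA⟩ := exists_mem_notMem_of_card_lt_card (s := A) (t := {i | a ≤ x i})
    (by omega)
  have := sum_le_topSum (x := x) (m := m + 1) (A := insert i A)
    (by rw [card_insert_of_notMem hiA]; omega)
  rw [sum_insert hiA, hAval] at this
  have := (mem_filter.mp hi).2
  omega

lemma topSum_add_mul_le_topSum_add {a r : ℕ} (h : m + r ≤ #{i | a ≤ x i}) :
    topSum m x + r * a ≤ topSum (m + r) x := by
  induction r with
  | zero => simp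
  | succ r ih =>
    have := topSum_add_le_topSum_succ (x := x) (m := m + r) (a := a) (by omega)
    have := ih (by omega)
    show topSum m x + (r + 1) * a ≤ topSum (m + r + 1) x
    rw [Nat.succ_mul]
    omega

lemma topSum_add_le_add_mul {a : ℕ} (hm : 1 ≤ m) (h : topSum m x ≤ a + topSum (m - 1) x)
    (r : ℕ) : topSum (m + r) x ≤ topSum m x + r * a := by
  induction r with
  | zero => simp
  | succ r ih =>
    have := topSum_le_add_topSum_pred_of_le hm (by omega : m ≤ m + r + 1) h
    rw [Nat.add_sub_cancel] at this
    rw [Nat.succ_mul, ← add_assoc]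
    omega

end Threshold

section Critical

variable {ι κ : Type*} [Fintype ι] [Fintype κ] [DecidableEq ι] [DecidableEq κ]
  {x : ι → ℕ} {y : κ → ℕ} {j : ι}

/-- Take the first `m` at which the top-`m` sum of `x + e_j` exceeds that of `y`. -/
lemma Submajorized.exists_critical (h : Submajorized x y)
    (hfail : ¬ ∀ i, Submajorized (x + Pi.single j 1) (y + Pi.single i 1)) :
    ∃ m, 1 ≤ m ∧ topSum m y ≤ topSum m x ∧ topSum m y ≤ x j + topSum (m - 1) y ∧
      ∀ i, topSum m y ≤ y i + topSum (m - 1) y →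
        Submajorized (x + Pi.single j 1) (y + Pi.single i 1) := by
  have hex : ∃ m, topSum m y < topSum m (x + Pi.single j 1) := by
    simp only [Submajorized, not_forall, not_le] at hfail
    obtain ⟨i, m, hm⟩ := hfail
    exact ⟨m, (topSum_le_topSum le_self_add).trans_lt hm⟩
  classical
  set m₀ := Nat.find hex
  have hlt : topSum m₀ y < topSum m₀ (x + Pi.single j 1) := Nat.find_spec hex
  have hmin : ∀ m < m₀, topSum m (x + Pi.single j 1) ≤ topSum m y :=
    fun m hm => not_lt.mp (Nat.find_min hex hm)
  have hm₀ : 1 ≤ m₀ := Nat.one_le_iff_ne_zero.mpr fun h0 => by simp [h0] at hlt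
  have hxj : topSum m₀ x ≤ x j + topSum (m₀ - 1) x := by
    by_contra hc
    rw [topSum_add_single_of_lt (not_le.mp hc)] at hlt
    exact (h m₀).not_gt hlt
  have := topSum_add_single_le m₀ x j
  have := h m₀
  have := h (m₀ - 1)
  refine ⟨m₀, hm₀, by omega, by omega, fun i hi m => ?_⟩
  rcases lt_or_ge m m₀ with hm | hm
  · exact (hmin m hm).trans (topSum_le_topSum le_self_add)
  · rw [topSum_add_single_of_le (hm₀.trans hm) (topSum_le_add_topSum_pred_of_le hm₀ hm hi)]
    have := h m
    have := topSum_add_single_le m x j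
    omega

lemma Submajorized.card_le_or_eq_univ (h : Submajorized x y) (j : ι) {W : Finset κ}
    (hW : ∀ i, Submajorized (x + Pi.single j 1) (y + Pi.single i 1) → i ∈ W) :
    #{j' | x j ≤ x j'} ≤ #W ∨ W = univ := by
  by_cases hall : ∀ i, Submajorized (x + Pi.single j 1) (y + Pi.single i 1)
  · exact Or.inr (eq_univ_of_forall fun i => hW i (hall i))
  obtain ⟨m, hm, hyx, hyj, hcrit⟩ := h.exists_critical hall
  rcases le_or_gt #{j' | x j ≤ x j'} m with hμ | hμ
  · exact (le_card_or_eq_univ_of_topSum fun i hi => hW i (hcrit i hi)).imp_left hμ.trans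
  -- Between `m` and `μ = #{j' | x j ≤ x j'}` the top sums of `x` grow by at least `x j` per step
  -- and those of `y` by at most `x j`; so the `μ` largest entries of `y` are all `≥ x j`.
  obtain ⟨r, hr⟩ : ∃ r, #{j' | x j ≤ x j'} = m + r + 1 := ⟨#{j' | x j ≤ x j'} - m - 1, by omega⟩
  have hx : topSum m x + (r + 1) * x j ≤ topSum (m + r + 1) x :=
    topSum_add_mul_le_topSum_add (by omega)
  have hy := topSum_add_le_add_mul hm hyj r
  have hxy := h (m + r + 1)
  rw [hr]
  refine le_card_or_eq_univ_of_topSum (x := y) fun i hi => hW i (h.add_single ?_)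
  rw [Nat.add_sub_cancel] at hi
  rw [Nat.succ_mul] at hx
  omega

end Critical

section Transport

variable {α κ : Type*}

lemma exists_le_sum_eq_of_le_sum {s : Finset κ} {p : κ → ℝ} (hp : ∀ i, 0 ≤ p i) {c : ℝ}
    (hc₀ : 0 ≤ c) (hc : c ≤ ∑ i ∈ s, p i) :
    ∃ q : κ → ℝ, (∀ i, 0 ≤ q i ∧ q i ≤ p i) ∧ (∀ i ∉ s, q i = 0) ∧ ∑ i ∈ s, q i = c := by
  classical
  set P := ∑ i ∈ s, p i
  have hθ : 0 ≤ c / P ∧ c / P ≤ 1 :=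
    ⟨div_nonneg hc₀ (hc₀.trans hc), div_le_one_of_le₀ hc (hc₀.trans hc)⟩
  refine ⟨fun i => if i ∈ s then c / P * p i else 0, fun i => ?_, fun i hi => if_neg hi, ?_⟩
  · dsimp only
    split_ifs
    · exact ⟨mul_nonneg hθ.1 (hp i), mul_le_of_le_one_left (hp i) hθ.2⟩
    · exact ⟨le_rfl, hp i⟩
  · rw [sum_ite_mem, inter_self, ← mul_sum]
    rcases (hc₀.trans hc).eq_or_lt with hP | hP
    · rw [← hP] at hc ⊢
      simp [le_antisymm hc hc₀]
    · exact div_mul_cancel₀ c hP.ne'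

variable [Fintype κ] [DecidableEq α] {β : Type*} [LinearOrder β]

/-- Hall's condition for allowed bin sets nested along `f` lets the masses `w j` be shipped to bins
inside `B j`, so the `w`-average of `M` is dominated by the `p`-average of `F`. -/
theorem add_sum_mul_le_sum_mul_of_hall (f : α → β) (B : α → Finset κ)
    (hB : ∀ j j', f j ≤ f j' → B j' ⊆ B j) (w M : α → ℝ) (F : κ → ℝ) (w₀ M₀ : ℝ)
    (hM₀ : ∀ i, M₀ ≤ F i) (S : Finset α) (hw : ∀ j ∈ S, 0 ≤ w j)
    (hMF : ∀ j ∈ S, ∀ i ∈ B j, M j ≤ F i) (p : κ → ℝ) (hp : ∀ i, 0 ≤ p i)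
    (hHall : ∀ j ∈ S, ∑ j' ∈ S with f j ≤ f j', w j' ≤ ∑ i ∈ B j, p i)
    (hmass : w₀ + ∑ j ∈ S, w j = ∑ i, p i) :
    w₀ * M₀ + ∑ j ∈ S, w j * M j ≤ ∑ i, p i * F i := by
  induction S using Finset.induction_on_max_value f generalizing p with
  | empty =>
    rw [sum_empty, add_zero] at hmass
    rw [sum_empty, add_zero, hmass, sum_mul]
    exact sum_le_sum fun i _ => mul_le_mul_of_nonneg_left (hM₀ i) (hp i)
  | insert a S haS hmax ih =>
    have hwa : 0 ≤ w a := hw a (mem_insert_self a S)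
    have hfilter : ∀ j ∈ S, {j' ∈ insert a S | f j ≤ f j'} = insert a {j' ∈ S | f j ≤ f j'} :=
      fun j hj => by rw [filter_insert, if_pos (hmax j hj)]
    have hwaB : w a ≤ ∑ i ∈ B a, p i := by
      refine le_trans ?_ (hHall a (mem_insert_self a S))
      exact single_le_sum (f := w) (fun j hj => hw j (mem_filter.mp hj).1)
        (mem_filter.mpr ⟨mem_insert_self a S, le_rfl⟩)
    obtain ⟨q, hqp, hq0, hqa⟩ := exists_le_sum_eq_of_le_sum hp hwa hwaB
    have hq : ∀ t, B a ⊆ t → ∑ i ∈ t, q i = w a := fun t ht =>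
      hqa ▸ (sum_subset ht fun i _ hi => hq0 i hi).symm
    have hrest := ih (fun j hj => hw j (mem_insert_of_mem hj))
      (fun j hj => hMF j (mem_insert_of_mem hj)) (p - q) (fun i => sub_nonneg.mpr (hqp i).2)
      (fun j hj => by
        have := hHall j (mem_insert_of_mem hj)
        rw [hfilter j hj, sum_insert (fun h => haS (mem_filter.mp h).1)] at this
        simp only [Pi.sub_apply, sum_sub_distrib, hq _ (hB j a (hmax j hj))]
        linarith)
      (by
        rw [sum_insert haS] at hmass
        simp only [Pi.sub_apply, sum_sub_distrib, hq _ (subset_univ _)]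
        linarith)
    have hMa : w a * M a ≤ ∑ i, q i * F i := by
      rw [← hq _ (subset_univ _), sum_mul]
      refine sum_le_sum fun i _ => ?_
      by_cases hi : i ∈ B a
      · exact mul_le_mul_of_nonneg_left (hMF a (mem_insert_self a S) i hi) (hqp i).1
      · simp [hq0 i hi]
    simp only [Pi.sub_apply, sub_mul, sum_sub_distrib] at hrest
    rw [sum_insert haS]
    linarith

end Transport

section Multinomial

variable {κ : Type*} [DecidableEq κ]

lemma card_filter_cons_eq {t : ℕ} (i : κ) (g : Fin t → κ) (i' : κ) :
    #{r | (Fin.cons i g : Fin (t + 1) → κ) r = i'} =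
      (Pi.single i 1 : κ → ℕ) i' + #{r | g r = i'} := by
  simp only [card_filter, Fin.sum_univ_succ, Fin.cons_zero, Fin.cons_succ, Pi.single_apply, eq_comm]

variable [Fintype κ]

/-- `expMaxLoad p t c = E[max_i (c i + L i)]` for a multinomial vector `L` with `t` trials and
probability vector `p`, by conditioning on the outcome of the first trial. -/
noncomputable def expMaxLoad (p : κ → ℝ) : ℕ → (κ → ℕ) → ℝ
  | 0, c => (univ.sup c : ℕ)
  | t + 1, c => ∑ i, p i * expMaxLoad p t (c + Pi.single i 1)

lemma expMaxLoad_eq_sum (p : κ → ℝ) (t : ℕ) (c : κ → ℕ) :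
    expMaxLoad p t c =
      ∑ f : Fin t → κ, (∏ r, p (f r)) * ((univ.sup fun i => c i + #{r | f r = i} : ℕ) : ℝ) := by
  induction t generalizing c with
  | zero => simp [expMaxLoad]
  | succ t ih =>
    rw [expMaxLoad, ← (Fin.consEquiv fun _ => κ).sum_comp, Fintype.sum_prod_type]
    refine sum_congr rfl fun i _ => ?_
    simp only [ih, mul_sum, Fin.consEquiv_apply, Fin.prod_univ_succ, Fin.cons_zero, Fin.cons_succ,
      card_filter_cons_eq, Pi.add_apply, add_assoc, mul_assoc]

lemma multiExpMax_eq_expMaxLoad (T k : ℕ) (p : Fin k → ℝ) :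
    multiExpMax T k p = expMaxLoad p T 0 := by
  simp [expMaxLoad_eq_sum, multiExpMax]

end Multinomial

lemma update_add_one_eq_add_single {ι : Type*} [DecidableEq ι] (x : ι → ℕ) (j : ι) :
    Function.update x j (x j + 1) = x + Pi.single j 1 := by
  ext i
  by_cases h : i = j <;> simp [h]

lemma sum_le_sum_of_card_le_of_forall_le {α κ : Type*} {A : Finset α} {B : Finset κ}
    {w : α → ℝ} {p : κ → ℝ} (hp : ∀ i ∈ B, 0 ≤ p i) (hcard : #A ≤ #B)
    (h : ∀ a ∈ A, ∀ b ∈ B, w a ≤ p b) : ∑ a ∈ A, w a ≤ ∑ b ∈ B, p b := by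
  obtain ⟨B', hB'B, hB'⟩ := exists_subset_card_eq hcard
  refine le_trans ?_ (sum_le_sum_of_subset_of_nonneg hB'B fun i hi _ => hp i hi)
  rcases A.eq_empty_or_nonempty with rfl | hA
  · simp_all
  calc ∑ a ∈ A, w a ≤ #A • A.sup' hA w := sum_le_card_nsmul _ _ _ fun a ha => le_sup' w ha
    _ = #B' • A.sup' hA w := by rw [hB']
    _ ≤ ∑ b ∈ B', p b := card_nsmul_le_sum _ _ _ fun b hb =>
        sup'_le hA w fun a ha => h a ha b (hB'B hb)

section MNL

variable {n : ℕ} {v : Fin n → ℝ}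

lemma one_add_sum_pos (hv : ∀ i, 0 < v i) (S : Finset (Fin n)) : 0 < 1 + ∑ j ∈ S, v j :=
  add_pos_of_pos_of_nonneg one_pos (sum_nonneg fun j _ => (hv j).le)

lemma phi_nonneg (hv : ∀ i, 0 < v i) (S : Finset (Fin n)) (j : Fin n) : 0 ≤ phi v S j :=
  div_nonneg (hv j).le (one_add_sum_pos hv S).le

lemma phi_le (hv : ∀ i, 0 < v i) {S : Finset (Fin n)} {j : Fin n} (hj : j ∈ S) :
    phi v S j ≤ v j / (1 + v j) :=
  div_le_div_of_nonneg_left (hv j).le (by linarith [hv j])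
    (add_le_add_right (single_le_sum (fun i _ => (hv i).le) hj) 1)

lemma phi0_add_sum_phi (hv : ∀ i, 0 < v i) (S : Finset (Fin n)) :
    phi0 v S + ∑ j ∈ S, phi v S j = 1 := by
  simp only [phi0, phi]
  rw [← sum_div, ← add_div, div_self (one_add_sum_pos hv S).ne']

lemma sum_phi_le_one (hv : ∀ i, 0 < v i) (S : Finset (Fin n)) : ∑ j ∈ S, phi v S j ≤ 1 := by
  have := phi0_add_sum_phi hv S
  have : 0 ≤ phi0 v S := div_nonneg zero_le_one (one_add_sum_pos hv S).le
  linarith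

end MNL

section Comparison

variable {n : ℕ} {v : Fin n → ℝ} {U : Finset (Fin n)} {κ : Type*} [Fintype κ] [DecidableEq κ]
  {p : κ → ℝ}

lemma dpVal_succ_le_expMaxLoad (hv : ∀ i, 0 < v i) (hp : ∀ i, 0 ≤ p i) (hsum : ∑ i, p i = 1)
    (hdom : ∀ i, ∀ j ∈ U, v j / (1 + v j) ≤ p i) {t : ℕ}
    (ih : ∀ ℓ c, Submajorized ℓ c → dpVal v U t ℓ ≤ expMaxLoad p t c)
    {ℓ : Fin n → ℕ} {c : κ → ℕ} (h : Submajorized ℓ c) :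
    dpVal v U (t + 1) ℓ ≤ expMaxLoad p (t + 1) c := by
  classical
  rw [dpVal, expMaxLoad]
  refine sup'_le _ _ fun S hS => ?_
  simp only [update_add_one_eq_add_single]
  set B : Fin n → Finset κ := fun j => {i | Submajorized (ℓ + Pi.single j 1) (c + Pi.single i 1)}
  have hφp : ∀ j ∈ S, ∀ i, phi v S j ≤ p i :=
    fun j hj i => (phi_le hv hj).trans (hdom i j (mem_powerset.mp hS hj))
  refine add_sum_mul_le_sum_mul_of_hall ℓ B ?_ (phi v S) _ _ (phi0 v S) _
    (fun i => ih _ _ (h.add_single_right i)) S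
    (fun j _ => phi_nonneg hv S j) (fun j _ i hi => ih _ _ (mem_filter.mp hi).2) p hp ?_
    (by rw [phi0_add_sum_phi hv, hsum])
  · intro j j' hjj' i hi
    exact mem_filter.mpr
      ⟨mem_univ i, ((Submajorized.refl ℓ).add_single hjj').trans (mem_filter.mp hi).2⟩
  · intro j hj
    rcases h.card_le_or_eq_univ j (W := B j) (fun i hi => mem_filter.mpr ⟨mem_univ i, hi⟩)
      with hcard | huniv
    · exact sum_le_sum_of_card_le_of_forall_le (fun i _ => hp i)
        ((card_le_card (filter_subset_filter _ (subset_univ S))).trans hcard)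
        fun a ha b _ => hφp a (mem_filter.mp ha).1 b
    · rw [huniv, hsum]
      exact (sum_le_sum_of_subset_of_nonneg (filter_subset _ S) fun j' _ _ =>
        phi_nonneg hv S j').trans (sum_phi_le_one hv S)

lemma dpVal_le_expMaxLoad (hv : ∀ i, 0 < v i) (hp : ∀ i, 0 ≤ p i) (hsum : ∑ i, p i = 1)
    (hdom : ∀ i, ∀ j ∈ U, v j / (1 + v j) ≤ p i) (t : ℕ) :
    ∀ ℓ c, Submajorized ℓ c → dpVal v U t ℓ ≤ expMaxLoad p t c := by
  induction t with
  | zero =>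
    intro ℓ c h
    have := h 1
    rw [topSum_one, topSum_one] at this
    simpa only [dpVal, expMaxLoad, Nat.cast_le] using this
  | succ t ih => exact fun ℓ c h => dpVal_succ_le_expMaxLoad hv hp hsum hdom ih h

end Comparison

/-- If every single-trial probability `p i` of a multinomial vector dominates the MNL
choice probability `v j / (1 + v j)` of every product `j` of the universe `U`, then the
expected maximum component of the multinomial vector dominates `OPT^DP(U)`. -/
theorem multinomial_max_dominates_dp
    (n T k : ℕ) (v : Fin n → ℝ) (hv : ∀ i, 0 < v i) (U : Finset (Fin n))
    (p : Fin k → ℝ) (hp : ∀ i, 0 ≤ p i) (hsum : ∑ i, p i = 1)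
    (hdom : ∀ i : Fin k, ∀ j ∈ U, v j / (1 + v j) ≤ p i) :
    multiExpMax T k p ≥ dpOpt v U T := by
  rw [multiExpMax_eq_expMaxLoad]
  exact dpVal_le_expMaxLoad hv hp hsum hdom T 0 0 fun m => by simp
end
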